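/- For a box W = ∏_{i=1}^n [a_i,b_i], a convex function f : W → ℝ, and each pair of opposite facets S_i (where x_i = a_i) and S_i* (where x_i = b_i), one has 2|S_i| · ⨍_W f ≤ ∫_{S_i} f + ∫_{S_i*} f, where |S_i| is the (n-1)-dimensional measure of S_i and ⨍_W f is the Lebesgue average of f over W. -/

import Mathlib

/-!
Write a point of the box as `(t, y)`, with `t` its `i`-th coordinate. By Fubini, `∫_W f` is the
integral over the facet box of `y ↦ ∫ f(t, y) dt`, and the one-dimensional Hermite–Hadamard
inequality bounds each inner integral by `(bᵢ - aᵢ) (f(aᵢ, y) + f(bᵢ, y)) / 2`. The facets are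
isometric copies of an `(n-1)`-dimensional box, on which `μH[n-1]` is a constant multiple of
Lebesgue measure; the constant appears on both sides and cancels. A convex function on a box is
integrable: it is bounded (above by its values at the vertices, below by reflection through the
centre) and continuous off the null boundary.
-/

open MeasureTheory Measure Set
open scoped NNReal

section ConvexBounds

variable {E : Type*} [AddCommGroup E] [Module ℝ E] {s : Set E} {f : E → ℝ}

lemma ConvexOn.bddAbove_image_convexHull {V : Set E} (hV : V.Finite)
    (hf : ConvexOn ℝ (convexHull ℝ V) f) : BddAbove (f '' convexHull ℝ V) := by
  obtain ⟨M, hM⟩ := (hV.image f).bddAbove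
  refine ⟨M, ?_⟩
  rintro _ ⟨x, hx, rfl⟩
  obtain ⟨y, hy, hxy⟩ := hf.exists_ge_of_mem_convexHull (subset_convexHull ℝ V) hx
  exact hxy.trans (hM (mem_image_of_mem f hy))

lemma ConvexOn.bddBelow_image_of_bddAbove (hf : ConvexOn ℝ s f) (c : E)
    (hs : ∀ x ∈ s, c - x ∈ s) (hbdd : BddAbove (f '' s)) : BddBelow (f '' s) := by
  obtain ⟨M, hM⟩ := hbdd
  refine ⟨2 * f ((1 / 2 : ℝ) • c) - M, ?_⟩
  rintro _ ⟨x, hx, rfl⟩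
  have hmid : (1 / 2 : ℝ) • x + (1 / 2 : ℝ) • (c - x) = (1 / 2 : ℝ) • c := by module
  have hc := hf.2 hx (hs x hx) (by norm_num : (0 : ℝ) ≤ 1 / 2)
    (by norm_num : (0 : ℝ) ≤ 1 / 2) (by norm_num)
  rw [hmid, smul_eq_mul, smul_eq_mul] at hc
  linarith [hM (mem_image_of_mem f (hs x hx))]

end ConvexBounds

section ConvexIntegrable

variable {E : Type*} [NormedAddCommGroup E] [NormedSpace ℝ E] [FiniteDimensional ℝ E]
  [MeasurableSpace E] [BorelSpace E] (μ : Measure E) [μ.IsAddHaarMeasure]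
  {s : Set E} {f : E → ℝ}

lemma ConvexOn.aestronglyMeasurable_restrict (hf : ConvexOn ℝ s f) :
    AEStronglyMeasurable f (μ.restrict s) := by
  rw [← Measure.restrict_congr_set (interior_ae_eq_of_null_frontier (hf.1.addHaar_frontier μ))]
  exact (hf.continuousOn_interior.aemeasurable isOpen_interior.measurableSet).aestronglyMeasurable

lemma ConvexOn.integrableOn_of_isBounded (hf : ConvexOn ℝ s f) (hs : MeasurableSet s)
    (hμs : μ s ≠ ⊤) (hfs : Bornology.IsBounded (f '' s)) : IntegrableOn f s μ := by
  obtain ⟨M, hM⟩ := hfs.exists_norm_le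
  exact (integrableOn_const hμs).mono' (hf.aestronglyMeasurable_restrict μ)
    (ae_restrict_of_forall_mem hs fun x hx => hM _ (mem_image_of_mem f hx))

end ConvexIntegrable

theorem ConvexOn.setIntegral_Icc_le_mul_add_div_two {g : ℝ → ℝ} {p q : ℝ} (hpq : p < q)
    (hg : ConvexOn ℝ (Icc p q) g) (hint : IntegrableOn g (Icc p q)) :
    ∫ t in Icc p q, g t ≤ (q - p) * ((g p + g q) / 2) := by
  have hqp : 0 < q - p := sub_pos.2 hpq
  have below_chord : ∀ t ∈ Icc p q,
      g t ≤ (q - t) * (g p / (q - p)) + (t - p) * (g q / (q - p)) := fun t ht => by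
    have h := hg.2 (left_mem_Icc.2 hpq.le) (right_mem_Icc.2 hpq.le)
      (div_nonneg (sub_nonneg.2 ht.2) hqp.le) (div_nonneg (sub_nonneg.2 ht.1) hqp.le)
      (by field_simp; ring)
    have harg : ((q - t) / (q - p)) • p + ((t - p) / (q - p)) • q = t := by
      simp only [smul_eq_mul]; field_simp; ring
    rw [harg] at h
    exact h.trans_eq (by simp only [smul_eq_mul]; ring)
  have hsub_left : ∫ t in p..q, (q - t) = (q - p) ^ 2 / 2 := by
    simp [intervalIntegral.integral_comp_sub_left fun x => x]
  have hsub_right : ∫ t in p..q, (t - p) = (q - p) ^ 2 / 2 := by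
    simp [intervalIntegral.integral_comp_sub_right fun x => x]
  calc ∫ t in Icc p q, g t
      ≤ ∫ t in Icc p q, ((q - t) * (g p / (q - p)) + (t - p) * (g q / (q - p))) :=
        setIntegral_mono_on hint (Continuous.integrableOn_Icc (by fun_prop)) measurableSet_Icc
          below_chord
    _ = (q - p) ^ 2 / 2 * (g p / (q - p)) + (q - p) ^ 2 / 2 * (g q / (q - p)) := by
        rw [integral_Icc_eq_integral_Ioc, ← intervalIntegral.integral_of_le hpq.le,
          intervalIntegral.integral_add (Continuous.intervalIntegrable (by fun_prop) _ _)
            (Continuous.intervalIntegrable (by fun_prop) _ _),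
          intervalIntegral.integral_mul_const, intervalIntegral.integral_mul_const,
          hsub_left, hsub_right]
    _ = (q - p) * ((g p + g q) / 2) := by field_simp

theorem setIntegral_Icc_prod_le_of_convexOn {Y : Type*} [MeasurableSpace Y] {ν : Measure Y}
    [SFinite ν] {B : Set Y} (hB : MeasurableSet B) {p q : ℝ} (hpq : p < q) {F : ℝ × Y → ℝ}
    (hF : IntegrableOn F (Icc p q ×ˢ B) (volume.prod ν))
    (hconv : ∀ y ∈ B, ConvexOn ℝ (Icc p q) fun t => F (t, y))
    (hp : IntegrableOn (fun y => F (p, y)) B ν) (hq : IntegrableOn (fun y => F (q, y)) B ν) :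
    ∫ z in Icc p q ×ˢ B, F z ∂(volume.prod ν) ≤
      (q - p) * (((∫ y in B, F (p, y) ∂ν) + ∫ y in B, F (q, y) ∂ν) / 2) := by
  rw [IntegrableOn, ← Measure.prod_restrict] at hF
  rw [← Measure.prod_restrict, integral_prod_symm _ hF, ← integral_add hp hq, ← integral_div,
    ← integral_const_mul]
  refine integral_mono_ae hF.integral_prod_right (((hp.add hq).div_const 2).const_mul _) ?_
  filter_upwards [hF.prod_left_ae, ae_restrict_mem hB] with y hy hyB
  exact (hconv y hyB).setIntegral_Icc_le_mul_add_div_two hpq hy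

namespace EuclideanSpace

variable {ι : Type*}

def box (a b : ι → ℝ) : Set (EuclideanSpace ℝ ι) := {x | ∀ j, x j ∈ Icc (a j) (b j)}

lemma box_eq_preimage_Icc (a b : ι → ℝ) : box a b = WithLp.ofLp ⁻¹' Icc a b := by
  ext x; simp [box, Pi.le_def, forall_and]

lemma convex_box (a b : ι → ℝ) : Convex ℝ (box a b) := by
  rw [box_eq_preimage_Icc]
  exact (convex_Icc a b).linear_preimage (WithLp.linearEquiv 2 ℝ (ι → ℝ)).toLinearMap

lemma isCompact_box (a b : ι → ℝ) : IsCompact (box a b) := by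
  rw [box_eq_preimage_Icc]
  exact (PiLp.homeomorph 2 (fun _ : ι => ℝ)).isCompact_preimage.2 isCompact_Icc

variable [Fintype ι] {a b : ι → ℝ} {f : EuclideanSpace ℝ ι → ℝ}

lemma measurableSet_box (a b : ι → ℝ) : MeasurableSet (box a b) :=
  (isCompact_box a b).isClosed.measurableSet

lemma convexHull_vertices_eq_box (hab : a ≤ b) :
    convexHull ℝ (WithLp.ofLp ⁻¹' univ.pi fun j => {a j, b j}) = box a b := by
  have hpre (S : Set (ι → ℝ)) :
      WithLp.ofLp ⁻¹' S = (WithLp.linearEquiv 2 ℝ (ι → ℝ)).symm '' S :=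
    (WithLp.linearEquiv 2 ℝ (ι → ℝ)).toEquiv.image_symm_eq_preimage S |>.symm
  have hull : convexHull ℝ (univ.pi fun j => ({a j, b j} : Set ℝ)) = Icc a b := by
    simp only [convexHull_pi, convexHull_pair, segment_eq_Icc (hab _), pi_univ_Icc]
  rw [box_eq_preimage_Icc, hpre, hpre, ← hull]
  exact (LinearMap.image_convexHull (WithLp.linearEquiv 2 ℝ (ι → ℝ)).symm.toLinearMap _).symm

lemma volume_real_box (hab : a ≤ b) : volume.real (box a b) = ∏ j, (b j - a j) := by
  rw [measureReal_def, box_eq_preimage_Icc, (PiLp.volume_preserving_ofLp ι).measure_preimage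
    measurableSet_Icc.nullMeasurableSet, Real.volume_Icc_pi, ENNReal.toReal_prod]
  exact Finset.prod_congr rfl fun j _ => ENNReal.toReal_ofReal (sub_nonneg.2 (hab j))

lemma _root_.ConvexOn.integrableOn_box (hab : a ≤ b) (hf : ConvexOn ℝ (box a b) f) :
    IntegrableOn f (box a b) := by
  have hV : (WithLp.ofLp ⁻¹' univ.pi fun j => ({a j, b j} : Set ℝ)).Finite :=
    (Set.Finite.pi fun j => toFinite _).preimage (WithLp.ofLp_injective 2).injOn
  have hup : BddAbove (f '' box a b) := by
    rw [← convexHull_vertices_eq_box hab] at hf ⊢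
    exact hf.bddAbove_image_convexHull hV
  have hrefl : ∀ x ∈ box a b, WithLp.toLp 2 (a + b) - x ∈ box a b := fun x hx j => by
    have := hx j
    simp only [PiLp.sub_apply, Pi.add_apply, mem_Icc] at this ⊢
    constructor <;> linarith
  refine hf.integrableOn_of_isBounded volume (measurableSet_box a b)
    (isCompact_box a b).measure_lt_top.ne ?_
  exact isBounded_iff_bddBelow_bddAbove.2 ⟨hf.bddBelow_image_of_bddAbove _ hrefl hup, hup⟩

variable {m : ℕ}

def insertNth (i : Fin (m + 1)) (t : ℝ) (y : EuclideanSpace ℝ (Fin m)) :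
    EuclideanSpace ℝ (Fin (m + 1)) :=
  WithLp.toLp 2 (Fin.insertNth i t y.ofLp)

variable {i : Fin (m + 1)} {t t' : ℝ} {y y' : EuclideanSpace ℝ (Fin m)}

@[simp] lemma insertNth_apply_same : insertNth i t y i = t := by simp [insertNth]

@[simp] lemma insertNth_apply_succAbove (k : Fin m) : insertNth i t y (i.succAbove k) = y k := by
  simp [insertNth]

lemma insertNth_add : insertNth i (t + t') (y + y') = insertNth i t y + insertNth i t' y' := by
  ext j; induction j using Fin.succAboveCases i <;> simp

lemma insertNth_smul (c : ℝ) : insertNth i (c * t) (c • y) = c • insertNth i t y := by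
  ext j; induction j using Fin.succAboveCases i <;> simp

lemma isometry_insertNth (i : Fin (m + 1)) (t : ℝ) : Isometry (insertNth i t) := by
  refine Isometry.of_dist_eq fun y y' => ?_
  simp [EuclideanSpace.dist_eq, Fin.sum_univ_succAbove _ i]

lemma insertNth_mem_box {a b : Fin (m + 1) → ℝ} :
    insertNth i t y ∈ box a b ↔
      t ∈ Icc (a i) (b i) ∧ y ∈ box (a ∘ i.succAbove) (b ∘ i.succAbove) := by
  simp [box, Fin.forall_iff_succAbove i]

lemma facet_eq_image_insertNth {a b : Fin (m + 1) → ℝ} (ht : t ∈ Icc (a i) (b i)) :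
    {x ∈ box a b | x i = t} = insertNth i t '' box (a ∘ i.succAbove) (b ∘ i.succAbove) := by
  ext x
  constructor
  · rintro ⟨hx, rfl⟩
    refine ⟨WithLp.toLp 2 (i.removeNth x.ofLp), fun k => hx (i.succAbove k), ?_⟩
    ext j; induction j using Fin.succAboveCases i <;> simp [Fin.removeNth]
  · rintro ⟨y, hy, rfl⟩
    exact ⟨insertNth_mem_box.2 ⟨ht, hy⟩, insertNth_apply_same⟩

def insertNthEquiv (i : Fin (m + 1)) :
    ℝ × EuclideanSpace ℝ (Fin m) ≃ᵐ EuclideanSpace ℝ (Fin (m + 1)) :=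
  ((MeasurableEquiv.refl ℝ).prodCongr (MeasurableEquiv.toLp 2 _).symm).trans
    ((MeasurableEquiv.piFinSuccAbove (fun _ => ℝ) i).symm.trans (MeasurableEquiv.toLp 2 _))

lemma insertNthEquiv_apply (p : ℝ × EuclideanSpace ℝ (Fin m)) :
    insertNthEquiv i p = insertNth i p.1 p.2 := rfl

lemma measurePreserving_insertNthEquiv (i : Fin (m + 1)) :
    MeasurePreserving (insertNthEquiv i) :=
  ((MeasurePreserving.id volume).prod (PiLp.volume_preserving_ofLp _)).trans
    (((volume_preserving_piFinSuccAbove (fun _ => ℝ) i).symm _).trans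
      (PiLp.volume_preserving_toLp _))

lemma preimage_insertNthEquiv_box (a b : Fin (m + 1) → ℝ) :
    insertNthEquiv i ⁻¹' box a b =
      Icc (a i) (b i) ×ˢ box (a ∘ i.succAbove) (b ∘ i.succAbove) := by
  ext p; exact insertNth_mem_box

variable {a b : Fin (m + 1) → ℝ} {f : EuclideanSpace ℝ (Fin (m + 1)) → ℝ}

lemma _root_.ConvexOn.comp_insertNth_of_mem_Icc (hf : ConvexOn ℝ (box a b) f)
    (ht : t ∈ Icc (a i) (b i)) :
    ConvexOn ℝ (box (a ∘ i.succAbove) (b ∘ i.succAbove)) fun y => f (insertNth i t y) := by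
  refine ⟨convex_box _ _, fun y hy y' hy' s u hs hu hsu => ?_⟩
  have h := hf.2 (insertNth_mem_box.2 ⟨ht, hy⟩) (insertNth_mem_box.2 ⟨ht, hy'⟩) hs hu hsu
  have hst : s * t + u * t = t := by rw [← add_mul, hsu, one_mul]
  rwa [← insertNth_smul, ← insertNth_smul, ← insertNth_add, hst] at h

lemma _root_.ConvexOn.comp_insertNth_of_mem_box (hf : ConvexOn ℝ (box a b) f)
    (hy : y ∈ box (a ∘ i.succAbove) (b ∘ i.succAbove)) :
    ConvexOn ℝ (Icc (a i) (b i)) fun t => f (insertNth i t y) := by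
  refine ⟨convex_Icc _ _, fun t ht t' ht' s u hs hu hsu => ?_⟩
  have h := hf.2 (insertNth_mem_box.2 ⟨ht, hy⟩) (insertNth_mem_box.2 ⟨ht', hy⟩) hs hu hsu
  rwa [← insertNth_smul, ← insertNth_smul, ← insertNth_add, Convex.combo_self hsu] at h

lemma hausdorffMeasure_facet {d : ℝ} (hd : 0 ≤ d) (ht : t ∈ Icc (a i) (b i)) :
    μH[d] {x ∈ box a b | x i = t} = μH[d] (box (a ∘ i.succAbove) (b ∘ i.succAbove)) := by
  rw [facet_eq_image_insertNth ht, (isometry_insertNth i t).hausdorffMeasure_image (Or.inl hd)]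

lemma setIntegral_facet_hausdorffMeasure {d : ℝ} (hd : 0 ≤ d) (ht : t ∈ Icc (a i) (b i)) :
    ∫ x in {x ∈ box a b | x i = t}, f x ∂μH[d] =
      ∫ y in box (a ∘ i.succAbove) (b ∘ i.succAbove), f (insertNth i t y) ∂μH[d] := by
  have hiso := isometry_insertNth i t
  have hmp : MeasurePreserving (insertNth i t) μH[d] (μH[d].restrict (range (insertNth i t))) :=
    ⟨hiso.continuous.measurable, hiso.map_hausdorffMeasure (Or.inl hd)⟩
  rw [← hmp.setIntegral_image_emb hiso.isClosedEmbedding.measurableEmbedding,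
    Measure.restrict_restrict_of_subset (image_subset_range _ _), facet_eq_image_insertNth ht]

lemma volume_real_box_eq_mul (hab : a ≤ b) (i : Fin (m + 1)) :
    volume.real (box a b) =
      (b i - a i) * volume.real (box (a ∘ i.succAbove) (b ∘ i.succAbove)) := by
  rw [volume_real_box hab,
    volume_real_box (a := a ∘ i.succAbove) (b := b ∘ i.succAbove) fun k => hab _,
    Fin.prod_univ_succAbove _ i]
  rfl

lemma setIntegral_box_le (hab : a ≤ b) (hi : a i < b i) (hf : ConvexOn ℝ (box a b) f) :
    ∫ x in box a b, f x ≤ (b i - a i) *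
      (((∫ y in box (a ∘ i.succAbove) (b ∘ i.succAbove), f (insertNth i (a i) y)) +
        ∫ y in box (a ∘ i.succAbove) (b ∘ i.succAbove), f (insertNth i (b i) y)) / 2) := by
  have hmp := measurePreserving_insertNthEquiv i
  have hemb := (insertNthEquiv i).measurableEmbedding
  have hab' : a ∘ i.succAbove ≤ b ∘ i.succAbove := fun k => hab _
  have hint : IntegrableOn (fun p => f (insertNthEquiv i p))
      (Icc (a i) (b i) ×ˢ box (a ∘ i.succAbove) (b ∘ i.succAbove)) (volume.prod volume) := by
    rw [← preimage_insertNthEquiv_box]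
    exact (hmp.integrableOn_comp_preimage hemb).2 (hf.integrableOn_box hab)
  rw [← hmp.setIntegral_preimage_emb hemb, preimage_insertNthEquiv_box, Measure.volume_eq_prod]
  simpa only [insertNthEquiv_apply] using
    setIntegral_Icc_prod_le_of_convexOn (measurableSet_box _ _) hi hint
    (fun y hy => hf.comp_insertNth_of_mem_box hy)
    ((hf.comp_insertNth_of_mem_Icc (left_mem_Icc.2 hi.le)).integrableOn_box hab')
    ((hf.comp_insertNth_of_mem_Icc (right_mem_Icc.2 hi.le)).integrableOn_box hab')

theorem two_mul_hausdorffMeasure_facet_mul_average_le (hab : ∀ j, a j < b j)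
    (hf : ConvexOn ℝ (box a b) f) (i : Fin (m + 1)) :
    2 * (μH[m] {x ∈ box a b | x i = a i}).toReal * ⨍ x in box a b, f x ≤
      (∫ x in {x ∈ box a b | x i = a i}, f x ∂μH[m]) +
        ∫ x in {x ∈ box a b | x i = b i}, f x ∂μH[m] := by
  set B := box (a ∘ i.succAbove) (b ∘ i.succAbove)
  set c : ℝ≥0 := addHaarScalarFactor (μH[m] : Measure (EuclideanSpace ℝ (Fin m))) volume
  have hμ : (μH[m] : Measure (EuclideanSpace ℝ (Fin m))) = c • volume :=
    isAddLeftInvariant_eq_smul _ _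
  have hfacet (t : ℝ) (ht : t ∈ Icc (a i) (b i)) :
      ∫ x in {x ∈ box a b | x i = t}, f x ∂μH[m] = c * ∫ y in B, f (insertNth i t y) := by
    rw [setIntegral_facet_hausdorffMeasure m.cast_nonneg ht, hμ, Measure.restrict_smul,
      integral_smul_nnreal_measure, NNReal.smul_def, smul_eq_mul]
  have hab' : a ≤ b := fun j => (hab j).le
  have hD : 0 < b i - a i := sub_pos.2 (hab i)
  have hB : 0 < volume.real B := by
    rw [volume_real_box (a := a ∘ i.succAbove) (b := b ∘ i.succAbove) fun k => (hab _).le]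
    exact Finset.prod_pos fun k _ => sub_pos.2 (hab _)
  have hleft := left_mem_Icc.2 (hab i).le
  have hI := setIntegral_box_le (i := i) hab' (hab i) hf
  rw [hausdorffMeasure_facet m.cast_nonneg hleft, hμ, ← measureReal_def,
    measureReal_nnreal_smul_apply, setAverage_eq, smul_eq_mul, volume_real_box_eq_mul hab' i,
    hfacet _ hleft, hfacet _ (right_mem_Icc.2 (hab i).le)]
  calc 2 * (c * volume.real B) * (((b i - a i) * volume.real B)⁻¹ * ∫ x in box a b, f x)
      = c * (2 * (∫ x in box a b, f x) / (b i - a i)) := by field_simp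
    _ ≤ c * ((∫ y in B, f (insertNth i (a i) y)) + ∫ y in B, f (insertNth i (b i) y)) := by
      gcongr
      rw [div_le_iff₀ hD]
      linarith
    _ = _ := mul_add _ _ _

end EuclideanSpace

/-- For a box `W = ∏ [aᵢ, bᵢ]`, a convex function `f : W → ℝ`, and each pair of opposite
facets `Sᵢ = {x ∈ W : xᵢ = aᵢ}` and `Sᵢ* = {x ∈ W : xᵢ = bᵢ}`, one has
`2 |Sᵢ| ⨍_W f ≤ ∫_{Sᵢ} f + ∫_{Sᵢ*} f`, the facet integrals being with respect to
`(n-1)`-dimensional Hausdorff measure. -/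
theorem stmt_5 {n : ℕ} (hn : 0 < n) (a b : Fin n → ℝ) (hab : ∀ i, a i < b i)
    (W : Set (EuclideanSpace ℝ (Fin n)))
    (hW : W = {x : EuclideanSpace ℝ (Fin n) | ∀ j, x j ∈ Set.Icc (a j) (b j)})
    (f : EuclideanSpace ℝ (Fin n) → ℝ) (hf : ConvexOn ℝ W f) (i : Fin n)
    (S Sstar : Set (EuclideanSpace ℝ (Fin n)))
    (hS : S = {x ∈ W | x i = a i}) (hSstar : Sstar = {x ∈ W | x i = b i}) :
    2 * (μH[(n : ℝ) - 1] S).toReal * ⨍ x in W, f x ≤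
      (∫ x in S, f x ∂(μH[(n : ℝ) - 1])) + ∫ x in Sstar, f x ∂(μH[(n : ℝ) - 1]) := by
  obtain ⟨m, rfl⟩ : ∃ m, n = m + 1 := ⟨n - 1, (Nat.succ_pred_eq_of_pos hn).symm⟩
  subst hW hS hSstar
  have hdim : ((m + 1 : ℕ) : ℝ) - 1 = m := by push_cast; ring
  rw [hdim]
  exact EuclideanSpace.two_mul_hausdorffMeasure_facet_mul_average_le hab hf i
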